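/- arXiv:2205.02634 — 7 statements merged into one kernel-verified Lean document; each statement's English description precedes it below -/
import Mathlib

section
/- For the path graph P_n with n ≥ 3, the super domination number equals ⌈n/2⌉. -/
/-- `S` is a super dominating set of `G`: it is dominating, and for every `u ∉ S`
there is `v ∈ S` whose neighbours outside `S` are exactly `{u}`. -/
def IsSuperDominatingSet {V : Type*} (G : SimpleGraph V) (S : Finset V) : Prop :=
  (∀ u ∉ S, ∃ v ∈ S, G.Adj v u) ∧
  ∀ u ∉ S, ∃ v ∈ S, ∀ w, (G.Adj v w ∧ w ∉ S) ↔ w = u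

/-- The super domination number of `G`. -/
noncomputable def superDominationNumber {V : Type*} [Fintype V] (G : SimpleGraph V) : ℕ :=
  sInf {n | ∃ S : Finset V, IsSuperDominatingSet G S ∧ S.card = n}

lemma count_base (n : ℕ) :
    ((Finset.range n).filter (fun i => i % 4 = 0 ∨ i % 4 = 3)).card
      + (if n % 4 = 3 then 1 else 0) = (n + 1) / 2 := by
  induction n with
  | zero => simp
  | succ n ih =>
    rw [Finset.range_add_one, Finset.filter_insert]
    by_cases h : n % 4 = 0 ∨ n % 4 = 3
    · rw [if_pos h, Finset.card_insert_of_notMem (by simp)]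
      split_ifs at ih ⊢ <;> omega
    · rw [if_neg h]
      split_ifs at ih ⊢ <;> omega

lemma lower_bound {n : ℕ} (S : Finset (Fin n)) (hS : IsSuperDominatingSet (SimpleGraph.pathGraph n) S) :
    (n + 1) / 2 ≤ S.card := by
  classical
  obtain ⟨-, h2⟩ := hS
  set f : Fin n → Fin n := fun u =>
    if h : u ∉ S then (h2 u h).choose else u with hf
  have hmap : ∀ u ∈ Finset.univ \ S, f u ∈ S := by
    intro u hu
    rw [Finset.mem_sdiff] at hu
    simp only [hf, dif_pos hu.2]
    exact (h2 u hu.2).choose_spec.1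
  have hinj : Set.InjOn f ↑(Finset.univ \ S) := by
    intro u1 hu1 u2 hu2 heq
    simp only [Finset.coe_sdiff, Set.mem_diff, Finset.mem_coe, Finset.coe_univ,
      Set.mem_univ, true_and] at hu1 hu2
    simp only [hf, dif_pos hu1, dif_pos hu2] at heq
    have s1 := (h2 u1 hu1).choose_spec.2
    have s2 := (h2 u2 hu2).choose_spec.2
    have hadj : (SimpleGraph.pathGraph n).Adj (h2 u1 hu1).choose u1 ∧ u1 ∉ S :=
      (s1 u1).mpr rfl
    rw [heq] at hadj
    exact (s2 u1).mp hadj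
  have hcard := Finset.card_le_card_of_injOn f hmap hinj
  have h1 : (Finset.univ \ S).card = n - S.card := by
    rw [Finset.card_sdiff_of_subset (Finset.subset_univ S), Finset.card_univ, Fintype.card_fin]
  have h2' : S.card ≤ n := by
    calc S.card ≤ Finset.univ.card := Finset.card_le_card (Finset.subset_univ S)
    _ = n := by rw [Finset.card_univ, Fintype.card_fin]
  omega

/-- for the path `P_n` with `n ≥ 3`, `γ_sp(P_n) = ⌈n/2⌉`. -/
theorem stmt_1 (n : ℕ) (hn : 3 ≤ n) :
    superDominationNumber (SimpleGraph.pathGraph n) = (n + 1) / 2 := by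
  classical
  set P : ℕ → Prop := fun i => i % 4 = 0 ∨ i % 4 = 3 ∨ (i + 1 = n ∧ n % 4 = 3) with hP
  set S : Finset (Fin n) := Finset.univ.filter (fun i => P i.val) with hSdef
  have hmem : ∀ i : Fin n, i ∈ S ↔ P i.val := by
    intro i; simp [hSdef]
  -- cardinality of S
  have hcard : S.card = (n + 1) / 2 := by
    have hc1 : S.card = ((Finset.range n).filter P).card := by
      apply Finset.card_bij (fun (a : Fin n) _ => a.val)
      · intro a ha
        rw [hmem] at ha
        rw [Finset.mem_filter, Finset.mem_range]
        exact ⟨a.isLt, ha⟩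
      · intro a _ b _ h
        exact Fin.ext h
      · intro b hb
        rw [Finset.mem_filter, Finset.mem_range] at hb
        exact ⟨⟨b, hb.1⟩, by rw [hmem]; exact hb.2, rfl⟩
    rw [hc1]
    by_cases h3 : n % 4 = 3
    · have hsplit : (Finset.range n).filter P =
          ((Finset.range n).filter (fun i => i % 4 = 0 ∨ i % 4 = 3)) ∪
          ((Finset.range n).filter (fun i => i = n - 1)) := by
        rw [← Finset.filter_or]
        apply Finset.filter_congr
        intro i hi
        rw [Finset.mem_range] at hi
        simp only [hP, eq_iff_iff]
        constructor
        · rintro (h | h | h) <;> omega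
        · rintro (h | h | h) <;> omega
      rw [hsplit, Finset.card_union_of_disjoint, Finset.filter_eq',
        if_pos (by rw [Finset.mem_range]; omega), Finset.card_singleton]
      · have := count_base n
        rw [if_pos h3] at this
        omega
      · rw [Finset.disjoint_filter]
        intro i hi hh heq
        rw [Finset.mem_range] at hi
        omega
    · have hsame : (Finset.range n).filter P =
          (Finset.range n).filter (fun i => i % 4 = 0 ∨ i % 4 = 3) := by
        apply Finset.filter_congr
        intro i hi
        simp only [hP, eq_iff_iff]
        constructor
        · rintro (h | h | h) <;> tauto
        · tauto
      rw [hsame]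
      have := count_base n
      rw [if_neg h3] at this
      omega
  -- S is super dominating
  have hsuper : IsSuperDominatingSet (SimpleGraph.pathGraph n) S := by
    constructor
    · intro u hu
      rw [hmem] at hu
      simp only [hP, not_or, not_and] at hu
      obtain ⟨h0, h3, hlast⟩ := hu
      by_cases h1 : u.val % 4 = 1
      · refine ⟨⟨u.val - 1, by omega⟩, ?_, ?_⟩
        · rw [hmem]; left; simp; omega
        · rw [SimpleGraph.pathGraph_adj]; left; simp; omega
      · have h2 : u.val % 4 = 2 := by omega
        have hlt : u.val + 1 < n := by
          rcases Nat.lt_or_ge (u.val + 1) n with h | h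
          · exact h
          · exfalso
            have : u.val + 1 = n := by omega
            exact hlast this (by omega)
        refine ⟨⟨u.val + 1, hlt⟩, ?_, ?_⟩
        · rw [hmem]; right; left; simp; omega
        · rw [SimpleGraph.pathGraph_adj]; right; simp
    · intro u hu
      have hu' := hu
      rw [hmem] at hu'
      simp only [hP, not_or, not_and] at hu'
      obtain ⟨h0, h3, hlast⟩ := hu'
      by_cases h1 : u.val % 4 = 1
      · refine ⟨⟨u.val - 1, by omega⟩, ?_, ?_⟩
        · rw [hmem]; left; simp; omega
        · intro w
          constructor
          · rintro ⟨hadj, hw⟩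
            rw [SimpleGraph.pathGraph_adj] at hadj
            rcases hadj with h | h
            · apply Fin.ext
              simp only [Fin.val_mk] at h ⊢
              omega
            · exfalso; apply hw; rw [hmem]
              right; left
              simp only [Fin.val_mk] at h
              omega
          · rintro rfl
            refine ⟨?_, hu⟩
            rw [SimpleGraph.pathGraph_adj]; left; simp; omega
      · have h2 : u.val % 4 = 2 := by omega
        have hlt : u.val + 1 < n := by
          rcases Nat.lt_or_ge (u.val + 1) n with h | h
          · exact h
          · exfalso
            have : u.val + 1 = n := by omega
            exact hlast this (by omega)
        refine ⟨⟨u.val + 1, hlt⟩, ?_, ?_⟩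
        · rw [hmem]; right; left; simp; omega
        · intro w
          constructor
          · rintro ⟨hadj, hw⟩
            rw [SimpleGraph.pathGraph_adj] at hadj
            rcases hadj with h | h
            · exfalso; apply hw; rw [hmem]
              left
              simp only [Fin.val_mk] at h
              omega
            · apply Fin.ext
              simp only [Fin.val_mk] at h ⊢
              omega
          · rintro rfl
            refine ⟨?_, hu⟩
            rw [SimpleGraph.pathGraph_adj]; right; simp
  -- conclude
  apply le_antisymm
  · exact Nat.sInf_le ⟨S, hsuper, hcard⟩
  · unfold superDominationNumber
    refine le_csInf ⟨(n + 1) / 2, S, hsuper, hcard⟩ ?_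
    rintro m ⟨T, hT, rfl⟩
    exact lower_bound T hT
end

section
/- For the cycle graph C_n, the super domination number equals ⌈n/2⌉ if n ≡ 0 or 3 (mod 4), and equals ⌈(n+1)/2⌉ otherwise. -/
open Finset SimpleGraph

theorem existsUnique_eq_or_eq_and_iff {α : Type*} {a b : α} (hab : a ≠ b) (P : α → Prop) :
    (∃! y, (y = a ∨ y = b) ∧ P y) ↔ (P a ↔ ¬P b) := by
  grind [ExistsUnique]

theorem even_of_nsmul_eq_zero_of_forall_add_iff_not {M : Type*} [AddMonoid M] {P : M → Prop}
    {g : M} (h : ∀ x, P (x + g) ↔ ¬P x) {m : ℕ} (hm : m • g = 0) : Even m := by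
  have key : ∀ k : ℕ, P (k • g) ↔ (P 0 ↔ Even k) := by
    intro k
    induction k with
    | zero => simp
    | succ k ih => rw [succ_nsmul, h, ih, Nat.even_add_one]; tauto
  have := key m
  rw [hm] at this
  tauto

theorem Nat.count_mod_four_lt_two (n : ℕ) :
    Nat.count (· % 4 < 2) n = 2 * (n / 4) + min (n % 4) 2 := by
  induction n with
  | zero => rfl
  | succ k ih => rw [Nat.count_succ, ih]; split <;> omega

section SuperDomination

variable {V : Type*} {G : SimpleGraph V} {S : Finset V}

theorem isSuperDominatingSet_iff :
    IsSuperDominatingSet G S ↔ ∀ u ∉ S, ∃ v ∈ S, ∀ w, (G.Adj v w ∧ w ∉ S) ↔ w = u :=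
  ⟨And.right, fun h ↦ ⟨fun u hu ↦ (h u hu).imp fun _ ⟨hv, hvu⟩ ↦ ⟨hv, ((hvu u).2 rfl).1⟩, h⟩⟩

variable [Fintype V] [DecidableEq V]

theorem IsSuperDominatingSet.card_compl_le (h : IsSuperDominatingSet G S) : #Sᶜ ≤ #S :=
  card_le_card_of_forall_subsingleton (fun u v ↦ ∀ w, (G.Adj v w ∧ w ∉ S) ↔ w = u)
    (fun u hu ↦ h.2 u (mem_compl.1 hu))
    (fun _ _ u₁ hu₁ _ hu₂ ↦ (hu₂.2 u₁).1 ((hu₁.2 u₁).2 rfl))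

theorem IsSuperDominatingSet.card_le_two_mul_card (h : IsSuperDominatingSet G S) :
    Fintype.card V ≤ 2 * #S := by
  have := h.card_compl_le
  rw [card_compl] at this
  have := card_le_univ S
  omega

theorem IsSuperDominatingSet.exists_bijOn_of_two_mul_card_eq (h : IsSuperDominatingSet G S)
    (hcard : 2 * #S = Fintype.card V) :
    ∃ f : V → V, Set.BijOn f (↑S)ᶜ S ∧ ∀ u ∉ S, ∀ w, (G.Adj (f u) w ∧ w ∉ S) ↔ w = u := by
  choose! f hfS hf using h.2
  have hinj : Set.InjOn f (↑S)ᶜ := fun u₁ hu₁ u₂ hu₂ he ↦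
    (hf u₂ hu₂ u₁).1 (he ▸ (hf u₁ hu₁ u₁).2 rfl)
  refine ⟨f, ⟨hfS, hinj, ?_⟩, hf⟩
  simpa using surjOn_of_injOn_of_card_le f (s := Sᶜ) (fun u hu ↦ hfS u (by simpa using hu))
    (by simpa using hinj)
    (by rw [card_compl]; omega)

theorem IsSuperDominatingSet.existsUnique_adj_of_two_mul_card_eq (h : IsSuperDominatingSet G S)
    (hcard : 2 * #S = Fintype.card V) (x : V) : ∃! y, G.Adj x y ∧ (y ∈ S ↔ x ∉ S) := by
  obtain ⟨f, ⟨hmaps, -, hsurj⟩, hf⟩ := h.exists_bijOn_of_two_mul_card_eq hcard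
  by_cases hx : x ∈ S
  · obtain ⟨u, hu, rfl⟩ := hsurj hx
    refine ⟨u, ⟨((hf u hu u).2 rfl).1, iff_of_false hu (not_not.2 hx)⟩, fun y hy ↦ ?_⟩
    exact (hf u hu y).1 ⟨hy.1, fun hyS ↦ hy.2.1 hyS hx⟩
  · refine ⟨f x, ⟨((hf x hx x).2 rfl).1.symm, iff_of_true (hmaps hx) hx⟩, fun y hy ↦ ?_⟩
    obtain ⟨u, hu, rfl⟩ := hsurj (hy.2.2 hx)
    rw [(hf u hu x).1 ⟨hy.1.symm, hx⟩]

end SuperDomination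

theorem cycleGraph_adj_iff_val {n : ℕ} (hn : 1 < n) {u v : Fin n} :
    (cycleGraph n).Adj u v ↔ u.val + 1 = v.val ∨ v.val + 1 = u.val ∨
      u.val + 1 = n ∧ v.val = 0 ∨ v.val + 1 = n ∧ u.val = 0 := by
  rw [cycleGraph_adj']
  rcases lt_trichotomy u v with h | rfl | h
  · rw [Fin.coe_sub_iff_lt.2 h, Fin.coe_sub_iff_le.2 h.le]
    omega
  · rw [Fin.coe_sub_iff_le.2 le_rfl]
    omega
  · rw [Fin.coe_sub_iff_le.2 h.le, Fin.coe_sub_iff_lt.2 h]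
    omega

theorem cycleGraph_existsUnique_adj_iff {n : ℕ} [NeZero n] (hn : 3 ≤ n) (P : Fin n → Prop)
    (x : Fin n) : (∃! y, (cycleGraph n).Adj x y ∧ P y) ↔ (P (x - 1) ↔ ¬P (x + 1)) := by
  obtain ⟨n, rfl⟩ : ∃ m, n = m + 2 := ⟨n - 2, by omega⟩
  have hne : x - 1 ≠ x + 1 := by
    rw [Ne, sub_eq_iff_eq_add, add_assoc, left_eq_add, Fin.ext_iff, Fin.val_add]
    simp [Nat.mod_eq_of_lt (show 2 < n + 2 by omega)]
  have hadj : ∀ y, (cycleGraph (n + 2)).Adj x y ↔ y = x - 1 ∨ y = x + 1 := fun y ↦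
    Set.ext_iff.1 cycleGraph_neighborSet y
  simp only [hadj]
  exact existsUnique_eq_or_eq_and_iff hne P

theorem isSuperDominatingSet_cycleGraph_mod_four_lt_two {n : ℕ} (hn : 1 < n) :
    IsSuperDominatingSet (cycleGraph n) {i : Fin n | i.val % 4 < 2} := by
  refine isSuperDominatingSet_iff.2 fun u hu ↦ ?_
  simp only [mem_filter, mem_univ, true_and, not_lt] at hu
  have hu' := u.isLt
  obtain ⟨v, hv⟩ : ∃ v : Fin n, u.val % 4 = 2 ∧ v.val + 1 = u.val ∨
      u.val % 4 = 3 ∧ (v.val = u.val + 1 ∨ u.val + 1 = n ∧ v.val = 0) := by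
    by_cases h2 : u.val % 4 = 2
    · exact ⟨⟨u.val - 1, by omega⟩, by dsimp only; omega⟩
    by_cases hlast : u.val + 1 = n
    · exact ⟨⟨0, by omega⟩, by dsimp only; omega⟩
    · exact ⟨⟨u.val + 1, by omega⟩, by dsimp only; omega⟩
  refine ⟨v, by simp only [mem_filter, mem_univ, true_and]; omega, fun w ↦ ?_⟩
  have := w.isLt
  simp only [cycleGraph_adj_iff_val hn, mem_filter, mem_univ, true_and, Fin.ext_iff]
  omega

theorem card_filter_mod_four_lt_two (n : ℕ) :
    #{i : Fin n | i.val % 4 < 2} = 2 * (n / 4) + min (n % 4) 2 := by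
  rw [← Nat.count_mod_four_lt_two, Nat.count_eq_card_filter_range, ← card_map Fin.valEmbedding]
  congr 1
  ext x
  simp [Fin.exists_iff]
  omega

open Fin.CommRing in
theorem IsSuperDominatingSet.four_dvd_of_two_mul_card_eq {n : ℕ} (hn : 3 ≤ n)
    {S : Finset (Fin n)} (h : IsSuperDominatingSet (cycleGraph n) S) (hcard : 2 * #S = n) :
    4 ∣ n := by
  have : NeZero n := ⟨by omega⟩
  have hstep : ∀ x : Fin n, x + 2 ∈ S ↔ x ∉ S := fun x ↦ by
    have := (cycleGraph_existsUnique_adj_iff hn _ (x + 1)).1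
      (h.existsUnique_adj_of_two_mul_card_eq (by simpa using hcard) (x + 1))
    rw [add_sub_cancel_right, add_assoc, one_add_one_eq_two] at this
    tauto
  have hhalf : Even (n / 2) := even_of_nsmul_eq_zero_of_forall_add_iff_not hstep <| by
    rw [nsmul_eq_mul, ← Nat.cast_two (R := Fin n), ← Nat.cast_mul,
      Nat.div_mul_cancel ⟨_, hcard.symm⟩, CharP.cast_eq_zero]
  obtain ⟨k, hk⟩ := hhalf
  omega

/-- for the cycle `C_n`, `γ_sp(C_n) = ⌈n/2⌉` if `n ≡ 0, 3 (mod 4)`,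
and `⌈(n+1)/2⌉` otherwise. -/
theorem stmt_2 (n : ℕ) (hn : 3 ≤ n) :
    superDominationNumber (SimpleGraph.cycleGraph n) =
      if n % 4 = 0 ∨ n % 4 = 3 then (n + 1) / 2 else (n + 2) / 2 := by
  have hupper := isSuperDominatingSet_cycleGraph_mod_four_lt_two (show 1 < n by omega)
  have hcard := card_filter_mod_four_lt_two n
  refine le_antisymm (Nat.sInf_le ⟨_, hupper, by rw [hcard]; split_ifs <;> omega⟩) ?_
  refine le_csInf ⟨_, _, hupper, rfl⟩ ?_
  rintro _ ⟨S, hS, rfl⟩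
  have hle := hS.card_le_two_mul_card
  have hdvd := hS.four_dvd_of_two_mul_card_eq hn
  rw [Fintype.card_fin] at hle
  split_ifs <;> omega
end

section
/- For the complete bipartite graph K_{n,m} with min{n,m} ≥ 2, the super domination number equals n+m−2. -/
/-- for the complete bipartite graph `K_{n,m}` with `min{n,m} ≥ 2`,
`γ_sp(K_{n,m}) = n + m - 2`. -/
theorem stmt_4 (n m : ℕ) (hn : 2 ≤ n) (hm : 2 ≤ m) :
    superDominationNumber (completeBipartiteGraph (Fin n) (Fin m)) = n + m - 2 := by
  classical
  set G := completeBipartiteGraph (Fin n) (Fin m)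
  have hcard : Fintype.card (Fin n ⊕ Fin m) = n + m := by simp
  set a0 : Fin n ⊕ Fin m := Sum.inl ⟨0, by omega⟩
  set b0 : Fin n ⊕ Fin m := Sum.inr ⟨0, by omega⟩
  set a1 : Fin n ⊕ Fin m := Sum.inl ⟨1, by omega⟩
  set b1 : Fin n ⊕ Fin m := Sum.inr ⟨1, by omega⟩
  set S0 : Finset (Fin n ⊕ Fin m) := Finset.univ \ {a0, b0} with hS0def
  have hmemS0 : ∀ u, u ∈ S0 ↔ ¬(u = a0 ∨ u = b0) := by
    intro u; simp [hS0def]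
  have hS0 : IsSuperDominatingSet G S0 := by
    constructor
    · intro u hu
      rw [hmemS0] at hu; push_neg at hu
      rcases hu with h | h
      · exact ⟨b1, by rw [hmemS0]; simp [a0, b0, b1, Fin.ext_iff],
          by simp [h, G, a0, b1]⟩
      · exact ⟨a1, by rw [hmemS0]; simp [a0, b0, a1, Fin.ext_iff],
          by simp [h, G, b0, a1]⟩
    · intro u hu
      rw [hmemS0] at hu; push_neg at hu
      rcases hu with h | h
      · refine ⟨b1, by rw [hmemS0]; simp [a0, b0, b1, Fin.ext_iff], ?_⟩
        intro w
        constructor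
        · rintro ⟨hadj, hw⟩
          rw [hmemS0] at hw; push_neg at hw
          rcases hw with h' | h'
          · rw [h', h]
          · exfalso; subst h'; simp [G, b0, b1] at hadj
        · rintro rfl
          refine ⟨by simp [h, G, a0, b1], by rw [hmemS0]; push_neg; simp [h]⟩
      · refine ⟨a1, by rw [hmemS0]; simp [a0, b0, a1, Fin.ext_iff], ?_⟩
        intro w
        constructor
        · rintro ⟨hadj, hw⟩
          rw [hmemS0] at hw; push_neg at hw
          rcases hw with h' | h'
          · exfalso; subst h'; simp [G, a0, a1] at hadj
          · rw [h', h]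
        · rintro rfl
          refine ⟨by simp [h, G, b0, a1], by rw [hmemS0]; push_neg; simp [h]⟩
  have hS0card : S0.card = n + m - 2 := by
    rw [hS0def, Finset.card_sdiff_of_subset (Finset.subset_univ _)]
    have : ({a0, b0} : Finset (Fin n ⊕ Fin m)).card = 2 := by
      rw [Finset.card_insert_of_notMem (by simp [a0, b0]), Finset.card_singleton]
    rw [this, Finset.card_univ, hcard]
  apply le_antisymm
  · exact Nat.sInf_le ⟨S0, hS0, hS0card⟩
  · refine le_csInf ⟨_, S0, hS0, rfl⟩ ?_
    rintro k ⟨S, hS, rfl⟩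
    have key : ∀ u1 ∉ S, ∀ u2 ∉ S, u1.isLeft = u2.isLeft → u1 = u2 := by
      intro u1 hu1 u2 hu2 hside
      obtain ⟨v, hvS, hv⟩ := hS.2 u1 hu1
      have hadj1 : G.Adj v u1 := ((hv u1).mpr rfl).1
      have hadj2 : G.Adj v u2 := by
        simp only [G, completeBipartiteGraph_adj] at hadj1 ⊢
        cases u1 <;> cases u2 <;> simp_all
      exact ((hv u2).mp ⟨hadj2, hu2⟩).symm
    have hcompl : Sᶜ.card ≤ 2 := by
      have : Sᶜ.card ≤ (Finset.univ : Finset Bool).card := by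
        apply Finset.card_le_card_of_injOn Sum.isLeft (fun _ _ => Finset.mem_univ _)
        intro x hx y hy hxy
        exact key x (Finset.mem_compl.mp hx) y (Finset.mem_compl.mp hy) hxy
      simpa using this
    have := Finset.card_compl S
    rw [hcard] at this
    have hle : S.card ≤ n + m := by
      have h2 := Finset.card_le_univ S; rw [hcard] at h2; omega
    omega
end

section
/- For the friendship graph F_n, the super domination number equals n+1. -/
/-- The friendship graph `F_n`: `n` triangles sharing the common center `none`. -/
def friendshipGraph (n : ℕ) : SimpleGraph (Option (Fin n × Fin 2)) :=
  SimpleGraph.fromRel (fun u w =>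
    u = none ∨ ∃ p q : Fin n × Fin 2, u = some p ∧ w = some q ∧ p.1 = q.1)

/-!
Each vertex outside a super dominating set `S` has a private neighbour in `S`, and distinct
outside vertices have distinct private neighbours, so `|V| ≤ 2|S|`; for `F_n` this gives
`|S| ≥ n + 1`. Conversely, the centre together with one vertex of each triangle is a super
dominating set: the remaining vertex of a triangle is the only outside neighbour of its partner.
-/

namespace IsSuperDominatingSet

variable {V : Type*} [Fintype V] [DecidableEq V] {G : SimpleGraph V} {S : Finset V}

-- The private neighbour `v ∈ S` of `u ∉ S` determines `u`, so `u ↦ v` injects `Sᶜ` into `S`.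
theorem card_compl_le_s6 (hS : IsSuperDominatingSet G S) : Sᶜ.card ≤ S.card := by
  choose! f hfS hf using hS.2
  refine Finset.card_le_card_of_injOn f (fun u hu => hfS u (Finset.mem_compl.mp hu)) ?_
  intro u hu u' hu' hfu
  rw [Finset.coe_compl, Set.mem_compl_iff, Finset.mem_coe] at hu hu'
  have hadj := (hf u hu u).mpr rfl
  rw [hfu] at hadj
  exact (hf u' hu' u).mp hadj

theorem card_univ_le_two_mul (hS : IsSuperDominatingSet G S) :
    Fintype.card V ≤ 2 * S.card := by
  have := Finset.card_compl_add_card S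
  have := hS.card_compl_le_s6
  omega

end IsSuperDominatingSet

theorem superDominationNumber_eq {V : Type*} [Fintype V] {G : SimpleGraph V} {k : ℕ}
    (hex : ∃ S : Finset V, IsSuperDominatingSet G S ∧ S.card = k)
    (hle : ∀ S : Finset V, IsSuperDominatingSet G S → k ≤ S.card) :
    superDominationNumber G = k := by
  refine le_antisymm (Nat.sInf_le hex) (le_csInf ⟨k, hex⟩ ?_)
  rintro _ ⟨S, hS, rfl⟩
  exact hle S hS

namespace friendshipGraph

variable {n : ℕ}

theorem adj_none_some (p : Fin n × Fin 2) : (friendshipGraph n).Adj none (some p) := by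
  simp [friendshipGraph]

theorem adj_some_some {p q : Fin n × Fin 2} :
    (friendshipGraph n).Adj (some p) (some q) ↔ p ≠ q ∧ p.1 = q.1 := by
  simp only [friendshipGraph, SimpleGraph.fromRel_adj, ne_eq, Option.some.injEq, reduceCtorEq,
    false_or, exists_and_left, exists_eq_left']
  constructor
  · rintro ⟨hne, h | h⟩ <;> exact ⟨hne, by simpa [eq_comm] using h⟩
  · rintro ⟨hne, h⟩
    exact ⟨hne, .inl h⟩

theorem card_vertices : Fintype.card (Option (Fin n × Fin 2)) = 2 * n + 1 := by
  simp [mul_comm]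

def outerVertices (n : ℕ) : Finset (Option (Fin n × Fin 2)) :=
  Finset.univ.image fun i => some (i, 1)

theorem mem_outerVertices {u : Option (Fin n × Fin 2)} :
    u ∈ outerVertices n ↔ ∃ i, u = some (i, 1) := by
  simp [outerVertices, eq_comm]

theorem card_compl_outerVertices : (outerVertices n)ᶜ.card = n + 1 := by
  rw [Finset.card_compl, card_vertices, outerVertices,
    Finset.card_image_of_injective _ fun i j h => by simpa using h, Finset.card_univ,
    Fintype.card_fin]
  omega

-- The centre dominates everything, and `(i, 0)` has `(i, 1)` as its only neighbour outside.
theorem isSuperDominatingSet_compl_outerVertices :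
    IsSuperDominatingSet (friendshipGraph n) (outerVertices n)ᶜ := by
  refine ⟨fun u hu => ?_, fun u hu => ?_⟩ <;>
    obtain ⟨i, rfl⟩ := mem_outerVertices.mp (Finset.notMem_compl.mp hu)
  · exact ⟨none, by simp [mem_outerVertices], adj_none_some _⟩
  · simp only [Finset.mem_compl, not_not, mem_outerVertices]
    refine ⟨some (i, 0), by simp, fun w => ⟨?_, ?_⟩⟩
    · rintro ⟨hadj, j, rfl⟩
      obtain ⟨-, rfl⟩ := adj_some_some.mp hadj
      rfl
    · rintro rfl
      exact ⟨adj_some_some.mpr ⟨by simp, rfl⟩, i, rfl⟩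

end friendshipGraph

/-- for the friendship graph `F_n`, `γ_sp(F_n) = n + 1`. -/
theorem stmt_6 (n : ℕ) :
    superDominationNumber (friendshipGraph n) = n + 1 := by
  refine superDominationNumber_eq ⟨_, friendshipGraph.isSuperDominatingSet_compl_outerVertices,
    friendshipGraph.card_compl_outerVertices⟩ fun S hS => ?_
  have := hS.card_univ_le_two_mul
  rw [friendshipGraph.card_vertices] at this
  omega
end

section
/- If v is a vertex of a graph G with deg(v) ≥ 2, then γ_sp(G ⊙ v) ≤ γ_sp(G) + ⌊deg(v)/2⌋ − 1. -/
/-- `G ⊙ v`: the graph obtained from `G` by removing all edges between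
any pair of neighbours of `v`. -/
def odot {V : Type*} (G : SimpleGraph V) (v : V) : SimpleGraph V where
  Adj a b := G.Adj a b ∧ ¬(G.Adj v a ∧ G.Adj v b)
  symm := ⟨fun a b ⟨h1, h2⟩ => ⟨h1.symm, fun ⟨p, q⟩ => h2 ⟨q, p⟩⟩⟩
  loopless := ⟨fun a ⟨h, _⟩ => G.irrefl h⟩

/-!
Take a minimum super dominating set `S` of `G` and dominators `f u ∈ S` with `N(f u) - S = {u}`
for `u ∉ S`. Passing to `G ⊙ v` only deletes edges, so `f u` still serves `u` unless the edge
`u (f u)` lies inside `N(v)`; call such `u` severed. The `k` severed vertices and their `k`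
dominators are distinct neighbours of `v`, so `k ≤ ⌊deg v / 2⌋`, and `S` together with the severed
vertices is super dominating in `G ⊙ v`. When `k = ⌊deg v / 2⌋ ≥ 1`, one vertex is saved (and
`v ∈ S`). If some unsevered `u` has `f u ∈ N(v)`, counting forces every vertex of `N(v) - S` to be
severed, so `v` itself can dominate one of them; otherwise `v` leaves the set and is dominated by
`f u₁` for a severed `u₁`.
-/

open Finset

section

variable {V : Type*} {G H : SimpleGraph V} {S T A B : Finset V} {f : V → V} {a u u₁ v w x : V}

/-- `N(w) ∩ (V - T) = {u}`. -/
def IsOnlyOutsideNeighbor (G : SimpleGraph V) (T : Finset V) (w u : V) : Prop :=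
  ∀ x, G.Adj w x ∧ x ∉ T ↔ x = u

theorem isOnlyOutsideNeighbor_iff :
    IsOnlyOutsideNeighbor G T w u ↔ G.Adj w u ∧ u ∉ T ∧ ∀ x, G.Adj w x → x ∉ T → x = u :=
  ⟨fun h => ⟨((h u).2 rfl).1, ((h u).2 rfl).2, fun x hx hxT => (h x).1 ⟨hx, hxT⟩⟩,
    fun ⟨hu, huT, h⟩ x => ⟨fun hx => h x hx.1 hx.2, fun hx => hx ▸ ⟨hu, huT⟩⟩⟩

namespace IsOnlyOutsideNeighbor

theorem adj (h : IsOnlyOutsideNeighbor G T w u) : G.Adj w u :=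
  (isOnlyOutsideNeighbor_iff.1 h).1

theorem eq_of_adj (h : IsOnlyOutsideNeighbor G T w u) (hx : G.Adj w x) (hxT : x ∉ T) : x = u :=
  (isOnlyOutsideNeighbor_iff.1 h).2.2 x hx hxT

theorem of_le (hHG : H ≤ G) (h : IsOnlyOutsideNeighbor G S w u) (hu : H.Adj w u) (huT : u ∉ T)
    (hST : ∀ x ∈ S, x ∉ T → ¬ H.Adj w x) : IsOnlyOutsideNeighbor H T w u :=
  isOnlyOutsideNeighbor_iff.2 ⟨hu, huT, fun x hx hxT =>
    h.eq_of_adj (hHG hx) fun hxS => hST x hxS hxT hx⟩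

end IsOnlyOutsideNeighbor

theorem isSuperDominatingSet_of_forall
    (h : ∀ u ∉ S, ∃ w ∈ S, IsOnlyOutsideNeighbor G S w u) : IsSuperDominatingSet G S :=
  ⟨fun u hu => (h u hu).imp fun _ ⟨hw, hwu⟩ => ⟨hw, hwu.adj⟩, h⟩

theorem superDominationNumber_le_card [Fintype V] (h : IsSuperDominatingSet G S) :
    superDominationNumber G ≤ #S :=
  Nat.sInf_le ⟨S, h, rfl⟩

theorem exists_isSuperDominatingSet_card_eq [Fintype V] (G : SimpleGraph V) :
    ∃ S, IsSuperDominatingSet G S ∧ #S = superDominationNumber G :=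
  Nat.sInf_mem (s := {n | ∃ S : Finset V, IsSuperDominatingSet G S ∧ #S = n})
    ⟨_, univ, isSuperDominatingSet_of_forall fun u hu => absurd (mem_univ u) hu, rfl⟩

def IsSuperDominatorMap (G : SimpleGraph V) (S : Finset V) (f : V → V) : Prop :=
  ∀ u ∉ S, f u ∈ S ∧ IsOnlyOutsideNeighbor G S (f u) u

theorem IsSuperDominatingSet.exists_isSuperDominatorMap (h : IsSuperDominatingSet G S) :
    ∃ f, IsSuperDominatorMap G S f := by
  classical
  choose! f hfS hf using h.2
  exact ⟨f, fun u hu => ⟨hfS u hu, hf u hu⟩⟩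

namespace IsSuperDominatorMap

variable (hf : IsSuperDominatorMap G S f)
include hf

theorem mem (hu : u ∉ S) : f u ∈ S := (hf u hu).1

theorem adj (hu : u ∉ S) : G.Adj (f u) u := (hf u hu).2.adj

theorem eq_of_adj (hu : u ∉ S) (hx : G.Adj (f u) x) (hxS : x ∉ S) : x = u :=
  (hf u hu).2.eq_of_adj hx hxS

theorem injOn : Set.InjOn f (↑S)ᶜ := fun _ hu _ hu' huu' =>
  (hf.eq_of_adj hu (huu' ▸ hf.adj hu') hu').symm

theorem card_add_card_le_degree [Fintype V] [DecidableEq V] [DecidableRel G.Adj]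
    (hA : ∀ u ∈ A, u ∉ S ∧ G.Adj v u) (hB : ∀ u ∈ B, u ∉ S ∧ G.Adj v (f u)) :
    #A + #B ≤ G.degree v := by
  have hfB : #(B.image f) = #B :=
    card_image_of_injOn (hf.injOn.mono fun u hu => (hB u hu).1)
  have hdisj : Disjoint A (B.image f) := disjoint_left.2 fun x hxA hxB => by
    obtain ⟨u, hu, rfl⟩ := mem_image.1 hxB
    exact (hA _ hxA).1 (hf.mem (hB u hu).1)
  rw [← hfB, ← card_union_of_disjoint hdisj, ← G.card_neighborFinset_eq_degree]
  refine card_le_card (union_subset (fun x hx => ?_) fun x hx => ?_)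
  · exact (G.mem_neighborFinset v x).2 (hA x hx).2
  · obtain ⟨u, hu, rfl⟩ := mem_image.1 hx
    exact (G.mem_neighborFinset v _).2 (hB u hu).2

end IsSuperDominatorMap

theorem ncard_neighborSet_eq_degree [Fintype V] [DecidableRel G.Adj] :
    (G.neighborSet v).ncard = G.degree v := by
  rw [← Nat.card_coe_set_eq, Nat.card_eq_fintype_card, G.card_neighborSet_eq_degree]

theorem odot_le : odot G v ≤ G := fun _ _ h => h.1

theorem odot_adj_self_left : (odot G v).Adj v x ↔ G.Adj v x :=
  ⟨And.left, fun h => ⟨h, fun h' => G.irrefl h'.1⟩⟩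

theorem odot_adj_self_right : (odot G v).Adj x v ↔ G.Adj x v := by
  rw [SimpleGraph.adj_comm, odot_adj_self_left, SimpleGraph.adj_comm]

/-- The vertices `u ∉ S` whose edge to `f u` is deleted in `G ⊙ v`. -/
def severedVertices [Fintype V] [DecidableEq V] (G : SimpleGraph V) [DecidableRel G.Adj] (v : V)
    (S : Finset V) (f : V → V) : Finset V :=
  {u | u ∉ S ∧ G.Adj v u ∧ G.Adj v (f u)}

section Severed

variable [Fintype V] [DecidableEq V] [DecidableRel G.Adj]

theorem mem_severedVertices :
    u ∈ severedVertices G v S f ↔ u ∉ S ∧ G.Adj v u ∧ G.Adj v (f u) := by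
  simp [severedVertices]

namespace IsSuperDominatorMap

variable (hf : IsSuperDominatorMap G S f)
include hf

theorem odot_adj (hu : u ∉ S) (huU : u ∉ severedVertices G v S f) : (odot G v).Adj (f u) u :=
  ⟨hf.adj hu, fun ⟨hfu, hvu⟩ => huU (mem_severedVertices.2 ⟨hu, hvu, hfu⟩)⟩

theorem mem_of_mem_severedVertices (hu : u ∈ severedVertices G v S f) : v ∈ S := by
  obtain ⟨huS, hvu, hvfu⟩ := mem_severedVertices.1 hu
  by_contra hvS
  exact G.irrefl (hf.eq_of_adj huS hvfu.symm hvS ▸ hvu)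

theorem two_mul_card_severedVertices_le : 2 * #(severedVertices G v S f) ≤ G.degree v := by
  rw [two_mul]
  exact hf.card_add_card_le_degree (fun u hu => (mem_severedVertices.1 hu).imp_right And.left)
    fun u hu => (mem_severedVertices.1 hu).imp_right And.right

theorem two_mul_card_severedVertices_add_two_le (ha : a ∉ S)
    (haU : a ∉ severedVertices G v S f) (hva : G.Adj v (f a)) (hx : x ∉ S)
    (hxU : x ∉ severedVertices G v S f) (hvx : G.Adj v x) :
    2 * #(severedVertices G v S f) + 2 ≤ G.degree v := by
  have := hf.card_add_card_le_degree (A := insert x (severedVertices G v S f))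
    (B := insert a (severedVertices G v S f)) (v := v)
    (by simpa [mem_severedVertices, hx, hvx] using fun u hu hvu _ => ⟨hu, hvu⟩)
    (by simpa [mem_severedVertices, ha, hva] using fun u hu _ hvfu => ⟨hu, hvfu⟩)
  rw [card_insert_of_notMem hxU, card_insert_of_notMem haU] at this
  omega

theorem isSuperDominatingSet_odot_union_severedVertices :
    IsSuperDominatingSet (odot G v) (S ∪ severedVertices G v S f) :=
  isSuperDominatingSet_of_forall fun u hu => by
    obtain ⟨huS, huU⟩ : u ∉ S ∧ u ∉ severedVertices G v S f := by simpa using hu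
    exact ⟨f u, mem_union_left _ (hf.mem huS), (hf u huS).2.of_le odot_le (hf.odot_adj huS huU) hu
      fun x hxS hxT _ => hxT (mem_union_left _ hxS)⟩

/-- `v`, whose edges survive in `G ⊙ v`, takes over the dominating of `u₁`. -/
theorem isSuperDominatingSet_odot_union_erase (hu₁ : u₁ ∈ severedVertices G v S f)
    (hN : ∀ x, G.Adj v x → x ∉ S → x ∈ severedVertices G v S f) :
    IsSuperDominatingSet (odot G v) (S ∪ (severedVertices G v S f).erase u₁) :=
  isSuperDominatingSet_of_forall fun u hu => by
    obtain ⟨huS, huU⟩ : u ∉ S ∧ u ∉ (severedVertices G v S f).erase u₁ := by simpa using hu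
    by_cases hu₁u : u = u₁
    · subst hu₁u
      refine ⟨v, mem_union_left _ (hf.mem_of_mem_severedVertices hu₁),
        isOnlyOutsideNeighbor_iff.2 ⟨odot_adj_self_left.2 (mem_severedVertices.1 hu₁).2.1, hu,
          fun x hvx hxT => ?_⟩⟩
      obtain ⟨hxS, hxU⟩ : x ∉ S ∧ x ∉ (severedVertices G v S f).erase u := by simpa using hxT
      by_contra hxu
      exact hxU (mem_erase.2 ⟨hxu, hN x (odot_adj_self_left.1 hvx) hxS⟩)
    · have huU' : u ∉ severedVertices G v S f := fun h => huU (mem_erase.2 ⟨hu₁u, h⟩)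
      exact ⟨f u, mem_union_left _ (hf.mem huS), (hf u huS).2.of_le odot_le
        (hf.odot_adj huS huU') hu fun x hxS hxT _ => hxT (mem_union_left _ hxS)⟩

/-- `f u₁`, no longer needed for `u₁`, dominates `v`, and the hypothesis `h` keeps `v` away from
the other dominators. -/
theorem isSuperDominatingSet_odot_erase_union (hu₁ : u₁ ∈ severedVertices G v S f)
    (h : ∀ a ∉ S, a ∉ severedVertices G v S f → ¬ G.Adj v (f a)) :
    IsSuperDominatingSet (odot G v) (S.erase v ∪ severedVertices G v S f) :=
  isSuperDominatingSet_of_forall fun u hu => by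
    obtain ⟨hu₁S, hvu₁, hvfu₁⟩ := mem_severedVertices.1 hu₁
    obtain ⟨huS, huU⟩ : (u ≠ v → u ∉ S) ∧ u ∉ severedVertices G v S f := by simpa using hu
    by_cases huv : u = v
    · subst huv
      refine ⟨f u₁, mem_union_left _ (mem_erase.2 ⟨fun h => G.irrefl (h ▸ hvfu₁), hf.mem hu₁S⟩),
        isOnlyOutsideNeighbor_iff.2 ⟨odot_adj_self_right.2 hvfu₁.symm, hu, fun x hx hxT => ?_⟩⟩
      by_cases hxS : x ∈ S
      · by_contra hxu
        exact hxT (mem_union_left _ (mem_erase.2 ⟨hxu, hxS⟩))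
      · exact absurd (mem_union_right _ (hf.eq_of_adj hu₁S (odot_le hx) hxS ▸ hu₁)) hxT
    · have huS' := huS huv
      have hfuv : f u ≠ v := fun hfu =>
        huU (hf.eq_of_adj huS' (hfu ▸ hvu₁) hu₁S ▸ hu₁)
      refine ⟨f u, mem_union_left _ (mem_erase.2 ⟨hfuv, hf.mem huS'⟩),
        (hf u huS').2.of_le odot_le (hf.odot_adj huS' huU) hu fun x hxS hxT hx => ?_⟩
      obtain rfl : x = v := by
        by_contra hxv
        exact hxT (mem_union_left _ (mem_erase.2 ⟨hxv, hxS⟩))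
      exact h u huS' huU (odot_le hx).symm

theorem superDominationNumber_odot_le :
    superDominationNumber (odot G v) ≤ #S + #(severedVertices G v S f) :=
  (superDominationNumber_le_card hf.isSuperDominatingSet_odot_union_severedVertices).trans
    (card_union_le _ _)

theorem superDominationNumber_odot_lt (hne : (severedVertices G v S f).Nonempty)
    (hdeg : G.degree v ≤ 2 * #(severedVertices G v S f) + 1) :
    superDominationNumber (odot G v) < #S + #(severedVertices G v S f) := by
  obtain ⟨u₁, hu₁⟩ := hne
  have hvS := hf.mem_of_mem_severedVertices hu₁
  by_cases h : ∀ a ∉ S, a ∉ severedVertices G v S f → ¬ G.Adj v (f a)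
  · calc _ ≤ #(S.erase v ∪ severedVertices G v S f) :=
          superDominationNumber_le_card (hf.isSuperDominatingSet_odot_erase_union hu₁ h)
      _ ≤ #(S.erase v) + #(severedVertices G v S f) := card_union_le _ _
      _ < #S + #(severedVertices G v S f) := by
          have := card_erase_lt_of_mem hvS
          omega
  · push Not at h
    obtain ⟨a, ha, haU, hva⟩ := h
    have hN : ∀ x, G.Adj v x → x ∉ S → x ∈ severedVertices G v S f := fun x hvx hxS => by
      by_contra hxU
      have := hf.two_mul_card_severedVertices_add_two_le ha haU hva hxS hxU hvx
      omega
    calc _ ≤ #(S ∪ (severedVertices G v S f).erase u₁) :=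
          superDominationNumber_le_card (hf.isSuperDominatingSet_odot_union_erase hu₁ hN)
      _ ≤ #S + #((severedVertices G v S f).erase u₁) := card_union_le _ _
      _ < #S + #(severedVertices G v S f) := by
          have := card_erase_lt_of_mem hu₁
          omega

end IsSuperDominatorMap

end Severed

end

/-- if `v` is a vertex of `G` with `deg(v) ≥ 2`, then
`γ_sp(G ⊙ v) ≤ γ_sp(G) + ⌊deg(v)/2⌋ - 1`. -/
theorem stmt_8 {V : Type*} [Fintype V] (G : SimpleGraph V) (v : V)
    (hv : 2 ≤ (G.neighborSet v).ncard) :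
    superDominationNumber (odot G v) ≤
      superDominationNumber G + (G.neighborSet v).ncard / 2 - 1 := by
  classical
  obtain ⟨S, hS, hS_card⟩ := exists_isSuperDominatingSet_card_eq G
  obtain ⟨f, hf⟩ := hS.exists_isSuperDominatorMap
  have hU := hf.two_mul_card_severedVertices_le (v := v)
  rw [ncard_neighborSet_eq_degree] at hv
  rw [ncard_neighborSet_eq_degree, ← hS_card]
  rcases Nat.lt_or_ge #(severedVertices G v S f) (G.degree v / 2) with hlt | hge
  · have := hf.superDominationNumber_odot_le (v := v)
    omega
  · have hne : (severedVertices G v S f).Nonempty := card_pos.1 (by omega)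
    have := hf.superDominationNumber_odot_lt hne (by omega)
    omega
end

section
/- Let G_1 and G_2 be disjoint connected graphs with chosen vertices y_1 ∈ V(G_1) and x_2 ∈ V(G_2), and let C(G_1,G_2) be the graph obtained by identifying y_1 with x_2. Then γ_sp(G_1) + γ_sp(G_2) − 1 ≤ γ_sp(C(G_1,G_2)) ≤ γ_sp(G_1) + γ_sp(G_2). -/
/-- The chain `C(G₁,G₂)` of two graphs: the one-point union obtained by identifying
the vertex `y₁` of `G₁` with the vertex `x₂` of `G₂` (the identified vertex `z` is
represented by `Sum.inl y₁`). -/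
def chainTwo {V₁ V₂ : Type*} (G₁ : SimpleGraph V₁) (G₂ : SimpleGraph V₂)
    (y₁ : V₁) (x₂ : V₂) : SimpleGraph (V₁ ⊕ {b : V₂ // b ≠ x₂}) :=
  SimpleGraph.fromRel (fun u w =>
    match u, w with
    | Sum.inl a, Sum.inl a' => G₁.Adj a a'
    | Sum.inl a, Sum.inr b => a = y₁ ∧ G₂.Adj x₂ b.1
    | Sum.inr b, Sum.inr b' => G₂.Adj b.1 b'.1
    | _, _ => False)

section helpers
variable {V : Type*} {G : SimpleGraph V}

lemma isSDS_of_witness {S : Finset V}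
    (h : ∀ u ∉ S, ∃ v ∈ S, ∀ w, (G.Adj v w ∧ w ∉ S) ↔ w = u) :
    IsSuperDominatingSet G S := by
  refine ⟨fun u hu => ?_, h⟩
  obtain ⟨v, hv, hw⟩ := h u hu
  exact ⟨v, hv, ((hw u).mpr rfl).1⟩

lemma isSDS_univ [Fintype V] : IsSuperDominatingSet G (Finset.univ : Finset V) := by
  exact ⟨fun u hu => absurd (Finset.mem_univ u) hu, fun u hu => absurd (Finset.mem_univ u) hu⟩

lemma sdn_nonempty [Fintype V] (G : SimpleGraph V) :
    {n | ∃ S : Finset V, IsSuperDominatingSet G S ∧ S.card = n}.Nonempty :=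
  ⟨_, Finset.univ, isSDS_univ, rfl⟩

lemma sdn_le [Fintype V] {S : Finset V} (h : IsSuperDominatingSet G S) :
    superDominationNumber G ≤ S.card :=
  Nat.sInf_le ⟨S, h, rfl⟩

lemma exists_sdn [Fintype V] (G : SimpleGraph V) :
    ∃ S : Finset V, IsSuperDominatingSet G S ∧ S.card = superDominationNumber G :=
  Nat.sInf_mem (sdn_nonempty G)

/-- the flip lemma: there is a super dominating set of the same size containing `Sᶜ`. -/
lemma flip_sds [Fintype V] [DecidableEq V] {S : Finset V} (h : IsSuperDominatingSet G S) :
    ∃ T : Finset V, IsSuperDominatingSet G T ∧ T.card = S.card ∧ ∀ v ∉ S, v ∈ T := by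
  classical
  obtain ⟨-, h⟩ := h
  choose! c hcS hc using h
  set I : Finset V := (Sᶜ).image c with hI
  have hmemI : ∀ t, t ∈ I ↔ ∃ u ∉ S, c u = t := by
    intro t; simp [hI, Finset.mem_image, Finset.mem_compl]
  have hadj : ∀ u ∉ S, G.Adj (c u) u := fun u hu => ((hc u hu u).mpr rfl).1
  have hinj : ∀ u ∉ S, ∀ u' ∉ S, c u = c u' → u = u' := by
    intro u hu u' hu' he
    exact (hc u' hu' u).mp ⟨he ▸ hadj u hu, hu⟩
  have hTmem : ∀ v ∉ S, v ∈ Iᶜ := by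
    intro v hv
    simp only [Finset.mem_compl, hmemI]
    rintro ⟨u, hu, hcu⟩
    exact hv (hcu ▸ hcS u hu)
  refine ⟨Iᶜ, ?_, ?_, hTmem⟩
  · refine isSDS_of_witness ?_
    intro u₀ hu₀
    rw [Finset.mem_compl, not_not, hmemI] at hu₀
    obtain ⟨u, hu, hcu⟩ := hu₀
    refine ⟨u, hTmem u hu, fun w => ⟨?_, ?_⟩⟩
    · rintro ⟨haw, hw⟩
      rw [Finset.mem_compl, not_not, hmemI] at hw
      obtain ⟨u'', hu'', hcu''⟩ := hw
      have := (hc u'' hu'' u).mp ⟨hcu'' ▸ haw.symm, hu⟩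
      rw [← hcu, ← hcu'', this]
    · rintro rfl
      refine ⟨(hcu ▸ hadj u hu).symm, ?_⟩
      rw [Finset.mem_compl, not_not, hmemI]
      exact ⟨u, hu, hcu⟩
  · have h1 : I.card = (Sᶜ).card := by
      apply Finset.card_image_of_injOn
      intro u hu u' hu' he
      exact hinj u (Finset.mem_compl.mp hu) u' (Finset.mem_compl.mp hu') he
    have h2 := Finset.card_compl I
    have h3 := Finset.card_compl S
    have h4 := Finset.card_le_univ S
    have h5 := Finset.card_le_univ I
    omega
end helpers


section chain
variable {V₁ V₂ : Type*} {G₁ : SimpleGraph V₁} {G₂ : SimpleGraph V₂} {y₁ : V₁} {x₂ : V₂}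

lemma chain_adj_ll {a a' : V₁} :
    (chainTwo G₁ G₂ y₁ x₂).Adj (Sum.inl a) (Sum.inl a') ↔ G₁.Adj a a' := by
  simp only [chainTwo, SimpleGraph.fromRel_adj]
  constructor
  · rintro ⟨hne, h | h⟩
    · exact h
    · exact h.symm
  · intro h
    exact ⟨by simpa using h.ne, Or.inl h⟩

lemma chain_adj_lr {a : V₁} {b : {b : V₂ // b ≠ x₂}} :
    (chainTwo G₁ G₂ y₁ x₂).Adj (Sum.inl a) (Sum.inr b) ↔ (a = y₁ ∧ G₂.Adj x₂ b.1) := by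
  simp [chainTwo, SimpleGraph.fromRel_adj]

lemma chain_adj_rl {a : V₁} {b : {b : V₂ // b ≠ x₂}} :
    (chainTwo G₁ G₂ y₁ x₂).Adj (Sum.inr b) (Sum.inl a) ↔ (a = y₁ ∧ G₂.Adj x₂ b.1) := by
  rw [SimpleGraph.adj_comm]; exact chain_adj_lr

lemma chain_adj_rr {b b' : {b : V₂ // b ≠ x₂}} :
    (chainTwo G₁ G₂ y₁ x₂).Adj (Sum.inr b) (Sum.inr b') ↔ G₂.Adj b.1 b'.1 := by
  simp only [chainTwo, SimpleGraph.fromRel_adj]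
  constructor
  · rintro ⟨hne, h | h⟩
    · exact h
    · exact h.symm
  · intro h
    refine ⟨?_, Or.inl h⟩
    simp only [ne_eq, Sum.inr.injEq]
    intro he
    exact h.ne (congrArg Subtype.val he)

variable [DecidableEq V₁] [DecidableEq V₂]

lemma chain_sds_of (S₁' : Finset V₁) (S₂' : Finset V₂) (hy : y₁ ∈ S₁') (hx : x₂ ∈ S₂')
    (h1 : ∀ u' ∉ S₁', (∃ c ∈ S₁', c ≠ y₁ ∧ ∀ w, (G₁.Adj c w ∧ w ∉ S₁') ↔ w = u') ∨
        ((∀ w, (G₁.Adj y₁ w ∧ w ∉ S₁') ↔ w = u') ∧ ∀ w, ¬(G₂.Adj x₂ w ∧ w ∉ S₂')))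
    (h2 : ∀ u ∉ S₂', u ≠ x₂ → (∃ c ∈ S₂', c ≠ x₂ ∧ ∀ w, (G₂.Adj c w ∧ w ∉ S₂') ↔ w = u) ∨
        ((∀ w, (G₂.Adj x₂ w ∧ w ∉ S₂') ↔ w = u) ∧ ∀ w, ¬(G₁.Adj y₁ w ∧ w ∉ S₁'))) :
    IsSuperDominatingSet (chainTwo G₁ G₂ y₁ x₂)
      (S₁'.image Sum.inl ∪ ((S₂'.subtype (· ≠ x₂)).image Sum.inr)) := by
  classical
  set T : Finset (V₁ ⊕ {b : V₂ // b ≠ x₂}) :=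
    S₁'.image Sum.inl ∪ ((S₂'.subtype (· ≠ x₂)).image Sum.inr) with hT
  have hmem_inl : ∀ a : V₁, Sum.inl a ∈ T ↔ a ∈ S₁' := by
    intro a
    simp [hT, Finset.mem_union, Finset.mem_image, Finset.mem_subtype]
  have hmem_inr : ∀ b : {b : V₂ // b ≠ x₂}, Sum.inr b ∈ T ↔ b.1 ∈ S₂' := by
    intro b
    simp only [hT, Finset.mem_union, Finset.mem_image, Finset.mem_subtype]
    constructor
    · rintro ((⟨a, _, h⟩) | ⟨b', hb', h⟩)
      · exact absurd h (by simp)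
      · rw [← (Sum.inr.injEq ..).mp h]; exact hb'
    · intro hb
      exact Or.inr ⟨b, hb, rfl⟩
  refine isSDS_of_witness ?_
  rintro (u' | b) hu₀
  · rw [hmem_inl] at hu₀
    rcases h1 u' hu₀ with ⟨c, hc, hcy, hiff⟩ | ⟨hiffy, hno2⟩
    · refine ⟨Sum.inl c, (hmem_inl c).mpr hc, ?_⟩
      rintro (w' | w')
      · constructor
        · rintro ⟨hadj, hw⟩
          rw [hmem_inl] at hw
          rw [(hiff w').mp ⟨chain_adj_ll.mp hadj, hw⟩]
        · rintro h
          rw [(Sum.inl.injEq ..).mp h]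
          exact ⟨chain_adj_ll.mpr ((hiff u').mpr rfl).1, by rw [hmem_inl]; exact hu₀⟩
      · constructor
        · rintro ⟨hadj, hw⟩
          exact absurd (chain_adj_lr.mp hadj).1 hcy
        · rintro h
          exact absurd h (by simp)
    · refine ⟨Sum.inl y₁, (hmem_inl y₁).mpr hy, ?_⟩
      rintro (w' | w')
      · constructor
        · rintro ⟨hadj, hw⟩
          rw [hmem_inl] at hw
          rw [(hiffy w').mp ⟨chain_adj_ll.mp hadj, hw⟩]
        · rintro h
          rw [(Sum.inl.injEq ..).mp h]
          exact ⟨chain_adj_ll.mpr ((hiffy u').mpr rfl).1, by rw [hmem_inl]; exact hu₀⟩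
      · constructor
        · rintro ⟨hadj, hw⟩
          rw [hmem_inr] at hw
          exact absurd ⟨(chain_adj_lr.mp hadj).2, hw⟩ (hno2 w'.1)
        · rintro h
          exact absurd h (by simp)
  · rw [hmem_inr] at hu₀
    rcases h2 b.1 hu₀ b.2 with ⟨c, hc, hcx, hiff⟩ | ⟨hiffx, hno1⟩
    · refine ⟨Sum.inr ⟨c, hcx⟩, (hmem_inr ⟨c, hcx⟩).mpr hc, ?_⟩
      rintro (w' | w')
      · constructor
        · rintro ⟨hadj, hw⟩
          rw [hmem_inl] at hw
          have := (chain_adj_rl.mp hadj).1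
          exact absurd (this ▸ hy) hw
        · rintro h
          exact absurd h (by simp)
      · constructor
        · rintro ⟨hadj, hw⟩
          rw [hmem_inr] at hw
          have : w'.1 = b.1 := (hiff w'.1).mp ⟨chain_adj_rr.mp hadj, hw⟩
          rw [Subtype.ext this]
        · rintro h
          rw [(Sum.inr.injEq ..).mp h]
          exact ⟨chain_adj_rr.mpr ((hiff b.1).mpr rfl).1, by rw [hmem_inr]; exact hu₀⟩
    · refine ⟨Sum.inl y₁, (hmem_inl y₁).mpr hy, ?_⟩
      rintro (w' | w')
      · constructor
        · rintro ⟨hadj, hw⟩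
          rw [hmem_inl] at hw
          exact absurd ⟨chain_adj_ll.mp hadj, hw⟩ (hno1 w')
        · rintro h
          exact absurd h (by simp)
      · constructor
        · rintro ⟨hadj, hw⟩
          rw [hmem_inr] at hw
          have : w'.1 = b.1 := (hiffx w'.1).mp ⟨(chain_adj_lr.mp hadj).2, hw⟩
          rw [Subtype.ext this]
        · rintro h
          rw [(Sum.inr.injEq ..).mp h]
          exact ⟨chain_adj_lr.mpr ⟨rfl, ((hiffx b.1).mpr rfl).1⟩, by rw [hmem_inr]; exact hu₀⟩

lemma chain_card_le [DecidableEq V₁] [DecidableEq V₂] (S₁' : Finset V₁) (S₂' : Finset V₂)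
    (hx : x₂ ∈ S₂') :
    (S₁'.image Sum.inl ∪ ((S₂'.subtype (· ≠ x₂)).image Sum.inr) :
      Finset (V₁ ⊕ {b : V₂ // b ≠ x₂})).card ≤ S₁'.card + (S₂'.card - 1) := by
  refine (Finset.card_union_le _ _).trans ?_
  rw [Finset.card_image_of_injective _ Sum.inl_injective,
    Finset.card_image_of_injective _ Sum.inr_injective, Finset.card_subtype,
    Finset.filter_ne', Finset.card_erase_of_mem hx]

lemma chain_upper [Fintype V₁] [Fintype V₂]
    (G₁ : SimpleGraph V₁) (G₂ : SimpleGraph V₂) (y₁ : V₁) (x₂ : V₂) :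
    superDominationNumber (chainTwo G₁ G₂ y₁ x₂) ≤
      superDominationNumber G₁ + superDominationNumber G₂ := by
  classical
  obtain ⟨S₁0, hS₁0, hc₁0⟩ := exists_sdn G₁
  have hex₁ : ∃ S₁ : Finset V₁, IsSuperDominatingSet G₁ S₁ ∧
      S₁.card = superDominationNumber G₁ ∧ y₁ ∈ S₁ := by
    by_cases hy : y₁ ∈ S₁0
    · exact ⟨S₁0, hS₁0, hc₁0, hy⟩
    · obtain ⟨T, hT, hTc, hTm⟩ := flip_sds hS₁0
      exact ⟨T, hT, hTc.trans hc₁0, hTm y₁ hy⟩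
  obtain ⟨S₁, hS₁, hc₁, hy⟩ := hex₁
  obtain ⟨S₂0, hS₂0, hc₂0⟩ := exists_sdn G₂
  have hex₂ : ∃ S₂ : Finset V₂, IsSuperDominatingSet G₂ S₂ ∧
      S₂.card = superDominationNumber G₂ ∧ x₂ ∈ S₂ := by
    by_cases hx : x₂ ∈ S₂0
    · exact ⟨S₂0, hS₂0, hc₂0, hx⟩
    · obtain ⟨T, hT, hTc, hTm⟩ := flip_sds hS₂0
      exact ⟨T, hT, hTc.trans hc₂0, hTm x₂ hx⟩
  obtain ⟨S₂, hS₂, hc₂, hx⟩ := hex₂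
  have hS₂pos : 1 ≤ S₂.card := Finset.card_pos.mpr ⟨x₂, hx⟩
  by_cases hA : ∃ a, (G₁.Adj y₁ a ∧ a ∉ S₁) ∧ ∀ w, G₁.Adj y₁ w ∧ w ∉ S₁ → w = a
  · -- case α : N(y₁)\S₁ is a singleton {a}; enlarge S₁ by a
    obtain ⟨a, ⟨haa, han⟩, hau⟩ := hA
    have h1 : ∀ u' ∉ insert a S₁,
        (∃ c ∈ insert a S₁, c ≠ y₁ ∧ ∀ w, (G₁.Adj c w ∧ w ∉ insert a S₁) ↔ w = u') ∨
        ((∀ w, (G₁.Adj y₁ w ∧ w ∉ insert a S₁) ↔ w = u') ∧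
          ∀ w, ¬(G₂.Adj x₂ w ∧ w ∉ S₂)) := by
      intro u' hu'
      have hu'S : u' ∉ S₁ := fun h => hu' (Finset.mem_insert_of_mem h)
      have hne : u' ≠ a := fun h => hu' (h ▸ Finset.mem_insert_self a S₁)
      obtain ⟨c, hcS, hciff⟩ := hS₁.2 u' hu'S
      have hcy : c ≠ y₁ := by
        rintro rfl
        exact hne ((hciff a).mp ⟨haa, han⟩).symm
      refine Or.inl ⟨c, Finset.mem_insert_of_mem hcS, hcy, fun w => ⟨?_, ?_⟩⟩
      · rintro ⟨hadj, hw⟩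
        exact (hciff w).mp ⟨hadj, fun h => hw (Finset.mem_insert_of_mem h)⟩
      · intro hwu
        rw [hwu]
        exact ⟨((hciff u').mpr rfl).1, hu'⟩
    have h2 : ∀ u ∉ S₂, u ≠ x₂ →
        (∃ c ∈ S₂, c ≠ x₂ ∧ ∀ w, (G₂.Adj c w ∧ w ∉ S₂) ↔ w = u) ∨
        ((∀ w, (G₂.Adj x₂ w ∧ w ∉ S₂) ↔ w = u) ∧
          ∀ w, ¬(G₁.Adj y₁ w ∧ w ∉ insert a S₁)) := by
      intro u huS hux
      obtain ⟨c, hcS, hciff⟩ := hS₂.2 u huS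
      by_cases hcx : c = x₂
      · subst hcx
        refine Or.inr ⟨hciff, ?_⟩
        rintro w ⟨hadj, hwm⟩
        exact hwm ((hau w ⟨hadj, fun h => hwm (Finset.mem_insert_of_mem h)⟩) ▸
          Finset.mem_insert_self a S₁)
      · exact Or.inl ⟨c, hcS, hcx, hciff⟩
    have hsds := chain_sds_of (insert a S₁) S₂ (Finset.mem_insert_of_mem hy) hx h1 h2
    have hle := sdn_le hsds
    have hcard := chain_card_le (x₂ := x₂) (insert a S₁) S₂ hx
    have hins : (insert a S₁).card ≤ S₁.card + 1 := Finset.card_insert_le a S₁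
    omega
  · by_cases hB : ∃ u, (G₂.Adj x₂ u ∧ u ∉ S₂) ∧ ∀ w, G₂.Adj x₂ w ∧ w ∉ S₂ → w = u
    · -- case β : N(x₂)\S₂ singleton {u₀}; enlarge S₂
      obtain ⟨u₀, ⟨hba, hbn⟩, hbu⟩ := hB
      have h1 : ∀ u' ∉ S₁,
          (∃ c ∈ S₁, c ≠ y₁ ∧ ∀ w, (G₁.Adj c w ∧ w ∉ S₁) ↔ w = u') ∨
          ((∀ w, (G₁.Adj y₁ w ∧ w ∉ S₁) ↔ w = u') ∧
            ∀ w, ¬(G₂.Adj x₂ w ∧ w ∉ insert u₀ S₂)) := by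
        intro u' hu'
        obtain ⟨c, hcS, hciff⟩ := hS₁.2 u' hu'
        by_cases hcy : c = y₁
        · subst hcy
          exact absurd ⟨u', ⟨((hciff u').mpr rfl).1, hu'⟩, fun w hw => (hciff w).mp hw⟩ hA
        · exact Or.inl ⟨c, hcS, hcy, hciff⟩
      have h2 : ∀ u ∉ insert u₀ S₂, u ≠ x₂ →
          (∃ c ∈ insert u₀ S₂, c ≠ x₂ ∧ ∀ w, (G₂.Adj c w ∧ w ∉ insert u₀ S₂) ↔ w = u) ∨
          ((∀ w, (G₂.Adj x₂ w ∧ w ∉ insert u₀ S₂) ↔ w = u) ∧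
            ∀ w, ¬(G₁.Adj y₁ w ∧ w ∉ S₁)) := by
        intro u hu hux
        have huS : u ∉ S₂ := fun h => hu (Finset.mem_insert_of_mem h)
        have hneu : u ≠ u₀ := fun h => hu (h ▸ Finset.mem_insert_self u₀ S₂)
        obtain ⟨c, hcS, hciff⟩ := hS₂.2 u huS
        have hcx : c ≠ x₂ := by
          rintro rfl
          exact hneu (hbu u ⟨((hciff u).mpr rfl).1, huS⟩)
        refine Or.inl ⟨c, Finset.mem_insert_of_mem hcS, hcx, fun w => ⟨?_, ?_⟩⟩
        · rintro ⟨hadj, hw⟩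
          exact (hciff w).mp ⟨hadj, fun h => hw (Finset.mem_insert_of_mem h)⟩
        · intro hwu
          rw [hwu]
          exact ⟨((hciff u).mpr rfl).1, hu⟩
      have hsds := chain_sds_of S₁ (insert u₀ S₂) hy (Finset.mem_insert_of_mem hx) h1 h2
      have hle := sdn_le hsds
      have hcard := chain_card_le (x₂ := x₂) S₁ (insert u₀ S₂) (Finset.mem_insert_of_mem hx)
      have hins : (insert u₀ S₂).card ≤ S₂.card + 1 := Finset.card_insert_le u₀ S₂
      omega
    · -- case γ : neither is a singleton
      have h1 : ∀ u' ∉ S₁,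
          (∃ c ∈ S₁, c ≠ y₁ ∧ ∀ w, (G₁.Adj c w ∧ w ∉ S₁) ↔ w = u') ∨
          ((∀ w, (G₁.Adj y₁ w ∧ w ∉ S₁) ↔ w = u') ∧
            ∀ w, ¬(G₂.Adj x₂ w ∧ w ∉ S₂)) := by
        intro u' hu'
        obtain ⟨c, hcS, hciff⟩ := hS₁.2 u' hu'
        by_cases hcy : c = y₁
        · subst hcy
          exact absurd ⟨u', ⟨((hciff u').mpr rfl).1, hu'⟩, fun w hw => (hciff w).mp hw⟩ hA
        · exact Or.inl ⟨c, hcS, hcy, hciff⟩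
      have h2 : ∀ u ∉ S₂, u ≠ x₂ →
          (∃ c ∈ S₂, c ≠ x₂ ∧ ∀ w, (G₂.Adj c w ∧ w ∉ S₂) ↔ w = u) ∨
          ((∀ w, (G₂.Adj x₂ w ∧ w ∉ S₂) ↔ w = u) ∧
            ∀ w, ¬(G₁.Adj y₁ w ∧ w ∉ S₁)) := by
        intro u huS hux
        obtain ⟨c, hcS, hciff⟩ := hS₂.2 u huS
        by_cases hcx : c = x₂
        · subst hcx
          exact absurd ⟨u, ⟨((hciff u).mpr rfl).1, huS⟩, fun w hw => (hciff w).mp hw⟩ hB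
        · exact Or.inl ⟨c, hcS, hcx, hciff⟩
      have hsds := chain_sds_of S₁ S₂ hy hx h1 h2
      have hle := sdn_le hsds
      have hcard := chain_card_le (x₂ := x₂) S₁ S₂ hx
      omega

lemma chain_lower [Fintype V₁] [Fintype V₂] [DecidableEq V₁] [DecidableEq V₂] :
    superDominationNumber G₁ + superDominationNumber G₂ ≤
      superDominationNumber (chainTwo G₁ G₂ y₁ x₂) + 1 := by
  classical
  obtain ⟨D, hD, hcard⟩ := exists_sdn (chainTwo G₁ G₂ y₁ x₂)
  set D₁ : Finset V₁ := D.toLeft with hD₁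
  set D₂ : Finset V₂ := D.toRight.image Subtype.val with hD₂
  have hmem₁ : ∀ a : V₁, a ∈ D₁ ↔ Sum.inl a ∈ D := fun a => Finset.mem_toLeft
  have hmem₂ : ∀ b : {b : V₂ // b ≠ x₂}, b.1 ∈ D₂ ↔ Sum.inr b ∈ D := by
    intro b
    simp only [hD₂, Finset.mem_image, Finset.mem_toRight]
    constructor
    · rintro ⟨b', hb', h⟩
      rwa [Subtype.ext h] at hb'
    · intro h
      exact ⟨b, h, rfl⟩
  have hx₂D₂ : x₂ ∉ D₂ := by
    simp only [hD₂, Finset.mem_image, Finset.mem_toRight]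
    rintro ⟨b, hb, h⟩
    exact b.2 h
  have hcards : D₁.card + D₂.card = D.card := by
    rw [hD₁, hD₂, Finset.card_image_of_injective _ Subtype.val_injective]
    exact Finset.card_toLeft_add_card_toRight
  -- `insert x₂ D₂` is always a super dominating set of `G₂`
  have claim2 : IsSuperDominatingSet G₂ (insert x₂ D₂) := by
    refine isSDS_of_witness ?_
    intro u hu
    have hux : u ≠ x₂ := fun h => hu (h ▸ Finset.mem_insert_self x₂ D₂)
    have huD₂ : u ∉ D₂ := fun h => hu (Finset.mem_insert_of_mem h)
    have huD : Sum.inr ⟨u, hux⟩ ∉ D := fun h => huD₂ ((hmem₂ ⟨u, hux⟩).mpr h)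
    obtain ⟨v, hvD, hviff⟩ := hD.2 _ huD
    match v with
    | Sum.inl c =>
      have hc := chain_adj_lr.mp ((hviff (Sum.inr ⟨u, hux⟩)).mpr rfl).1
      refine ⟨x₂, Finset.mem_insert_self x₂ D₂, fun w => ⟨?_, ?_⟩⟩
      · rintro ⟨hadj, hw⟩
        have hwx : w ≠ x₂ := fun h => hw (h ▸ Finset.mem_insert_self x₂ D₂)
        have hwD : Sum.inr ⟨w, hwx⟩ ∉ D :=
          fun h => hw (Finset.mem_insert_of_mem ((hmem₂ ⟨w, hwx⟩).mpr h))
        have := (hviff (Sum.inr ⟨w, hwx⟩)).mp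
          ⟨chain_adj_lr.mpr ⟨hc.1, hadj⟩, hwD⟩
        exact congrArg Subtype.val ((Sum.inr.injEq ..).mp this)
      · intro hwu
        rw [hwu]
        exact ⟨hc.2, hu⟩
    | Sum.inr c =>
      refine ⟨c.1, Finset.mem_insert_of_mem ((hmem₂ c).mpr hvD), fun w => ⟨?_, ?_⟩⟩
      · rintro ⟨hadj, hw⟩
        have hwx : w ≠ x₂ := fun h => hw (h ▸ Finset.mem_insert_self x₂ D₂)
        have hwD : Sum.inr ⟨w, hwx⟩ ∉ D :=
          fun h => hw (Finset.mem_insert_of_mem ((hmem₂ ⟨w, hwx⟩).mpr h))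
        have := (hviff (Sum.inr ⟨w, hwx⟩)).mp ⟨chain_adj_rr.mpr hadj, hwD⟩
        exact congrArg Subtype.val ((Sum.inr.injEq ..).mp this)
      · intro hwu
        rw [hwu]
        exact ⟨chain_adj_rr.mp ((hviff (Sum.inr ⟨u, hux⟩)).mpr rfl).1, hu⟩
  have hx₂card : (insert x₂ D₂).card ≤ D₂.card + 1 := Finset.card_insert_le x₂ D₂
  by_cases hzD : Sum.inl y₁ ∈ D
  · -- the identified vertex belongs to D
    have claim1 : IsSuperDominatingSet G₁ D₁ := by
      refine isSDS_of_witness ?_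
      intro u hu
      have huD : Sum.inl u ∉ D := fun h => hu ((hmem₁ u).mpr h)
      obtain ⟨v, hvD, hviff⟩ := hD.2 _ huD
      match v with
      | Sum.inl c =>
        refine ⟨c, (hmem₁ c).mpr hvD, fun w => ⟨?_, ?_⟩⟩
        · rintro ⟨hadj, hw⟩
          have hwD : Sum.inl w ∉ D := fun h => hw ((hmem₁ w).mpr h)
          exact (Sum.inl.injEq ..).mp ((hviff (Sum.inl w)).mp ⟨chain_adj_ll.mpr hadj, hwD⟩)
        · intro hwu
          rw [hwu]
          exact ⟨chain_adj_ll.mp ((hviff (Sum.inl u)).mpr rfl).1, hu⟩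
      | Sum.inr b =>
        have hc := chain_adj_rl.mp ((hviff (Sum.inl u)).mpr rfl).1
        exact absurd (hc.1 ▸ hzD) huD
    have g1 := sdn_le claim1
    have g2 := sdn_le claim2
    omega
  · obtain ⟨vz, hvzD, hvziff⟩ := hD.2 _ hzD
    match vz with
    | Sum.inl a =>
      -- the witness of z lies on the G₁ side : D₁ works for G₁
      have claim1 : IsSuperDominatingSet G₁ D₁ := by
        refine isSDS_of_witness ?_
        intro u hu
        have huD : Sum.inl u ∉ D := fun h => hu ((hmem₁ u).mpr h)
        by_cases huy : u = y₁
        · subst huy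
          refine ⟨a, (hmem₁ a).mpr hvzD, fun w => ⟨?_, ?_⟩⟩
          · rintro ⟨hadj, hw⟩
            have hwD : Sum.inl w ∉ D := fun h => hw ((hmem₁ w).mpr h)
            exact (Sum.inl.injEq ..).mp
              ((hvziff (Sum.inl w)).mp ⟨chain_adj_ll.mpr hadj, hwD⟩)
          · intro hwu
            rw [hwu]
            exact ⟨chain_adj_ll.mp ((hvziff (Sum.inl u)).mpr rfl).1, hu⟩
        · obtain ⟨v, hvD, hviff⟩ := hD.2 _ huD
          match v with
          | Sum.inl c =>
            refine ⟨c, (hmem₁ c).mpr hvD, fun w => ⟨?_, ?_⟩⟩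
            · rintro ⟨hadj, hw⟩
              have hwD : Sum.inl w ∉ D := fun h => hw ((hmem₁ w).mpr h)
              exact (Sum.inl.injEq ..).mp
                ((hviff (Sum.inl w)).mp ⟨chain_adj_ll.mpr hadj, hwD⟩)
            · intro hwu
              rw [hwu]
              exact ⟨chain_adj_ll.mp ((hviff (Sum.inl u)).mpr rfl).1, hu⟩
          | Sum.inr b =>
            have hc := chain_adj_rl.mp ((hviff (Sum.inl u)).mpr rfl).1
            exact absurd hc.1 huy
      have g1 := sdn_le claim1
      have g2 := sdn_le claim2
      omega
    | Sum.inr b =>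
      -- the witness of z lies on the G₂ side
      have hzb := chain_adj_rl.mp ((hvziff (Sum.inl y₁)).mpr rfl).1
      have claim1 : IsSuperDominatingSet G₁ (insert y₁ D₁) := by
        refine isSDS_of_witness ?_
        intro u hu
        have huy : u ≠ y₁ := fun h => hu (h ▸ Finset.mem_insert_self y₁ D₁)
        have huD₁ : u ∉ D₁ := fun h => hu (Finset.mem_insert_of_mem h)
        have huD : Sum.inl u ∉ D := fun h => huD₁ ((hmem₁ u).mpr h)
        obtain ⟨v, hvD, hviff⟩ := hD.2 _ huD
        match v with
        | Sum.inl c =>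
          refine ⟨c, Finset.mem_insert_of_mem ((hmem₁ c).mpr hvD), fun w => ⟨?_, ?_⟩⟩
          · rintro ⟨hadj, hw⟩
            have hwD : Sum.inl w ∉ D :=
              fun h => hw (Finset.mem_insert_of_mem ((hmem₁ w).mpr h))
            exact (Sum.inl.injEq ..).mp
              ((hviff (Sum.inl w)).mp ⟨chain_adj_ll.mpr hadj, hwD⟩)
          · intro hwu
            rw [hwu]
            exact ⟨chain_adj_ll.mp ((hviff (Sum.inl u)).mpr rfl).1, hu⟩
        | Sum.inr b' =>
          have hc := chain_adj_rl.mp ((hviff (Sum.inl u)).mpr rfl).1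
          exact absurd hc.1 huy
      have claim2' : IsSuperDominatingSet G₂ D₂ := by
        refine isSDS_of_witness ?_
        intro u hu
        by_cases hux : u = x₂
        · refine ⟨b.1, (hmem₂ b).mpr hvzD, fun w => ⟨?_, ?_⟩⟩
          · rintro ⟨hadj, hw⟩
            by_cases hwx : w = x₂
            · exact hwx.trans hux.symm
            · have hwD : Sum.inr ⟨w, hwx⟩ ∉ D := fun h => hw ((hmem₂ ⟨w, hwx⟩).mpr h)
              have := (hvziff (Sum.inr ⟨w, hwx⟩)).mp ⟨chain_adj_rr.mpr hadj, hwD⟩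
              exact absurd this (by simp)
          · intro hwu
            rw [hwu, hux]
            exact ⟨hzb.2.symm, hx₂D₂⟩
        · have huD : Sum.inr ⟨u, hux⟩ ∉ D := fun h => hu ((hmem₂ ⟨u, hux⟩).mpr h)
          obtain ⟨v, hvD, hviff⟩ := hD.2 _ huD
          match v with
          | Sum.inl c =>
            have hc := chain_adj_lr.mp ((hviff (Sum.inr ⟨u, hux⟩)).mpr rfl).1
            exact absurd (hc.1 ▸ hvD) hzD
          | Sum.inr c =>
            refine ⟨c.1, (hmem₂ c).mpr hvD, fun w => ⟨?_, ?_⟩⟩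
            · rintro ⟨hadj, hw⟩
              by_cases hwx : w = x₂
              · have hadj' : (chainTwo G₁ G₂ y₁ x₂).Adj (Sum.inr c) (Sum.inl y₁) :=
                  chain_adj_rl.mpr ⟨rfl, (hwx ▸ hadj).symm⟩
                have := (hviff (Sum.inl y₁)).mp ⟨hadj', hzD⟩
                exact absurd this (by simp)
              · have hwD : Sum.inr ⟨w, hwx⟩ ∉ D := fun h => hw ((hmem₂ ⟨w, hwx⟩).mpr h)
                have := (hviff (Sum.inr ⟨w, hwx⟩)).mp ⟨chain_adj_rr.mpr hadj, hwD⟩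
                exact congrArg Subtype.val ((Sum.inr.injEq ..).mp this)
            · intro hwu
              rw [hwu]
              exact ⟨chain_adj_rr.mp ((hviff (Sum.inr ⟨u, hux⟩)).mpr rfl).1, hu⟩
      have g1 := sdn_le claim1
      have g2 := sdn_le claim2'
      have hy₁card : (insert y₁ D₁).card ≤ D₁.card + 1 := Finset.card_insert_le y₁ D₁
      omega

end chain

/-- for disjoint connected graphs `G₁, G₂` and the chain `C(G₁,G₂)`
obtained by identifying `y₁ ∈ V(G₁)` with `x₂ ∈ V(G₂)`,
`γ_sp(G₁) + γ_sp(G₂) - 1 ≤ γ_sp(C(G₁,G₂)) ≤ γ_sp(G₁) + γ_sp(G₂)`. -/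
theorem stmt_11 {V₁ V₂ : Type*} [Fintype V₁] [Fintype V₂] [DecidableEq V₂]
    (G₁ : SimpleGraph V₁) (G₂ : SimpleGraph V₂) (h₁ : G₁.Connected) (h₂ : G₂.Connected)
    (y₁ : V₁) (x₂ : V₂) :
    superDominationNumber G₁ + superDominationNumber G₂ - 1 ≤
      superDominationNumber (chainTwo G₁ G₂ y₁ x₂) ∧
    superDominationNumber (chainTwo G₁ G₂ y₁ x₂) ≤
      superDominationNumber G₁ + superDominationNumber G₂ := by
  classical
  constructor
  · have h := chain_lower (G₁ := G₁) (G₂ := G₂) (y₁ := y₁) (x₂ := x₂)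
    omega
  · exact chain_upper G₁ G₂ y₁ x₂
end

section
/- The upper bound in the bouquet inequality is sharp: the bouquet of n copies of P_2 (each with a chosen endpoint) is the star K_{1,n}, and γ_sp(K_{1,n}) = n = Σ_{i=1}^n γ_sp(P_2) (using γ_sp(P_2) = 1). -/
/-- The bouquet `B(G₁,…,Gₙ)` of the graphs `G i` with respect to the vertices
`x i ∈ V(G i)`: the one-point union identifying all the `x i` into the single
common vertex `none`. -/
def bouquet {n : ℕ} {V : Fin n → Type*} (G : ∀ i, SimpleGraph (V i))
    (x : ∀ i, V i) : SimpleGraph (Option (Σ i : Fin n, {v : V i // v ≠ x i})) :=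
  SimpleGraph.fromRel (fun u w =>
    match u, w with
    | none, some b => (G b.1).Adj (x b.1) b.2.1
    | some b, some b' => ∃ h : b.1 = b'.1, (G b'.1).Adj (h ▸ b.2.1) b'.2.1
    | _, _ => False)

/-- The star graph `K_{1,n}`: a center (`none`) adjacent to `n` leaves. -/
def starGraph (n : ℕ) : SimpleGraph (Option (Fin n)) :=
  SimpleGraph.fromRel (fun u _ => u = none)

lemma isSuperDom_map {V W : Type*} [DecidableEq W] {G : SimpleGraph V} {H : SimpleGraph W}
    (e : G ≃g H) {S : Finset V} (hS : IsSuperDominatingSet G S) :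
    IsSuperDominatingSet H (S.image e) := by
  have hmem : ∀ w : W, w ∈ S.image e ↔ e.symm w ∈ S := by
    intro w
    simp only [Finset.mem_image]
    constructor
    · rintro ⟨v, hv, rfl⟩; simpa using hv
    · intro h; exact ⟨e.symm w, h, by simp⟩
  have hadj : ∀ (v : V) (w : W), H.Adj (e v) w ↔ G.Adj v (e.symm w) := by
    intro v w
    rw [← e.symm.map_adj_iff]
    simp
  constructor
  · intro u hu
    obtain ⟨v, hv, hvu⟩ := hS.1 (e.symm u) (by simpa [hmem] using hu)
    exact ⟨e v, Finset.mem_image_of_mem _ hv, by rw [hadj]; exact hvu⟩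
  · intro u hu
    obtain ⟨v, hv, hvu⟩ := hS.2 (e.symm u) (by simpa [hmem] using hu)
    refine ⟨e v, Finset.mem_image_of_mem _ hv, fun w => ?_⟩
    rw [hadj, hmem, hvu (e.symm w)]
    constructor
    · intro h; simpa using congrArg e h
    · rintro rfl; simp

lemma superDom_iso {V W : Type*} [Fintype V] [Fintype W] {G : SimpleGraph V}
    {H : SimpleGraph W} (e : G ≃g H) :
    superDominationNumber G = superDominationNumber H := by
  classical
  unfold superDominationNumber
  congr 1
  ext n
  constructor
  · rintro ⟨S, hS, rfl⟩
    exact ⟨S.image e, isSuperDom_map e hS, Finset.card_image_of_injective _ e.injective⟩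
  · rintro ⟨S, hS, rfl⟩
    exact ⟨S.image e.symm, isSuperDom_map e.symm hS,
      Finset.card_image_of_injective _ e.symm.injective⟩

lemma superDom_eq {V : Type*} [Fintype V] {G : SimpleGraph V} {n : ℕ}
    (h1 : ∃ S : Finset V, IsSuperDominatingSet G S ∧ S.card = n)
    (h2 : ∀ S : Finset V, IsSuperDominatingSet G S → n ≤ S.card) :
    superDominationNumber G = n := by
  refine le_antisymm (Nat.sInf_le h1) (le_csInf ⟨n, h1⟩ ?_)
  rintro m ⟨S, hS, rfl⟩
  exact h2 S hS

lemma p2_superDom : superDominationNumber (SimpleGraph.pathGraph 2) = 1 := by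
  apply superDom_eq
  · refine ⟨{0}, ⟨?_, ?_⟩, rfl⟩
    · intro u hu
      refine ⟨0, Finset.mem_singleton_self 0, ?_⟩
      rw [SimpleGraph.pathGraph_two_eq_top]
      simp only [Finset.mem_singleton] at hu
      exact fun h => hu h.symm
    · intro u hu
      simp only [Finset.mem_singleton] at hu
      refine ⟨0, Finset.mem_singleton_self 0, fun w => ?_⟩
      rw [SimpleGraph.pathGraph_two_eq_top]
      simp only [Finset.mem_singleton, SimpleGraph.top_adj]
      constructor
      · rintro ⟨h1, h2⟩
        omega
      · rintro rfl
        exact ⟨fun h => hu h.symm, hu⟩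
  · intro S hS
    rcases Finset.eq_empty_or_nonempty S with rfl | h
    · obtain ⟨v, hv, -⟩ := hS.1 0 (Finset.notMem_empty 0)
      exact absurd hv (Finset.notMem_empty v)
    · exact Finset.one_le_card.mpr h

lemma starGraph_adj {n : ℕ} (u w : Option (Fin n)) :
    (starGraph n).Adj u w ↔ u ≠ w ∧ (u = none ∨ w = none) := by
  simp [starGraph, SimpleGraph.fromRel_adj]

lemma star_superDom (n : ℕ) (hn : 1 ≤ n) : superDominationNumber (starGraph n) = n := by
  classical
  apply superDom_eq
  · refine ⟨Finset.univ.image some, ⟨?_, ?_⟩, ?_⟩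
    · intro u hu
      have hu' : u = none := by
        rcases u with _ | a
        · rfl
        · exact absurd (Finset.mem_image_of_mem some (Finset.mem_univ a)) hu
      subst hu'
      refine ⟨some ⟨0, hn⟩, Finset.mem_image_of_mem some (Finset.mem_univ _), ?_⟩
      rw [starGraph_adj]
      simp
    · intro u hu
      have hu' : u = none := by
        rcases u with _ | a
        · rfl
        · exact absurd (Finset.mem_image_of_mem some (Finset.mem_univ a)) hu
      subst hu'
      refine ⟨some ⟨0, hn⟩, Finset.mem_image_of_mem some (Finset.mem_univ _), fun w => ?_⟩
      rw [starGraph_adj]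
      constructor
      · rintro ⟨⟨h1, h2⟩, h3⟩
        rcases h2 with h2 | rfl
        · exact absurd h2 (by simp)
        · rfl
      · rintro rfl
        exact ⟨⟨by simp, Or.inr rfl⟩, hu⟩
    · rw [Finset.card_image_of_injective _ (Option.some_injective _)]
      simp
  · intro S hS
    by_contra hlt
    push_neg at hlt
    have hcompl : 1 < Sᶜ.card := by
      have := Finset.card_compl S
      have hV : Fintype.card (Option (Fin n)) = n + 1 := by simp
      omega
    obtain ⟨a, ha, b, hb, hab⟩ := Finset.one_lt_card.mp hcompl
    rw [Finset.mem_compl] at ha hb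
    -- at least one of a, b is a `some`
    by_cases hnone : (none : Option (Fin n)) ∈ S
    · -- both a and b are some
      obtain ⟨a', rfl⟩ : ∃ a', a = some a' :=
        Option.ne_none_iff_exists'.mp (fun h => ha (h ▸ hnone))
      obtain ⟨b', rfl⟩ : ∃ b', b = some b' :=
        Option.ne_none_iff_exists'.mp (fun h => hb (h ▸ hnone))
      obtain ⟨v, hv, hva⟩ := hS.2 (some a') ha
      have hadj : (starGraph n).Adj v (some a') := ((hva (some a')).mpr rfl).1
      rw [starGraph_adj] at hadj
      have hv_none : v = none := by
        rcases hadj.2 with h | h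
        · exact h
        · exact absurd h (by simp)
      subst hv_none
      have := (hva (some b')).mp ⟨by rw [starGraph_adj]; exact ⟨by simp, Or.inl rfl⟩, hb⟩
      simp at this
      exact hab (by rw [this])
    · -- none ∉ S; find a leaf outside S
      have : ∃ c : Fin n, some c ∉ S := by
        rcases a with _ | a'
        · rcases b with _ | b'
          · exact absurd rfl hab
          · exact ⟨b', hb⟩
        · exact ⟨a', ha⟩
      obtain ⟨c, hc⟩ := this
      obtain ⟨v, hv, hvc⟩ := hS.1 (some c) hc
      rw [starGraph_adj] at hvc
      rcases hvc.2 with h | h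
      · subst h; exact hnone hv
      · exact absurd h (by simp)

lemma fin2_sub_eq (v : {v : Fin 2 // v ≠ (0 : Fin 2)}) : v = ⟨1, one_ne_zero⟩ := by
  obtain ⟨v, hv⟩ := v
  have h0 : v.val ≠ 0 := fun h => hv (Fin.ext h)
  have h2 := v.isLt
  simp only [Subtype.ext_iff, Fin.ext_iff]
  omega

noncomputable def bouquetStarIso (n : ℕ) :
    bouquet (fun _ : Fin n => SimpleGraph.pathGraph 2) (fun _ => (0 : Fin 2)) ≃g starGraph n where
  toFun u := u.map Sigma.fst
  invFun u := u.map (fun i => ⟨i, ⟨1, one_ne_zero⟩⟩)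
  left_inv u := by
    rcases u with _ | ⟨i, v⟩
    · rfl
    · simp [Option.map, fin2_sub_eq v]
  right_inv u := by rcases u with _ | i <;> rfl
  map_rel_iff' := by
    intro u w
    rcases u with _ | ⟨i, v⟩ <;> rcases w with _ | ⟨i', v'⟩
    · simp [bouquet, starGraph, SimpleGraph.fromRel_adj]
    · have hv := v'.2
      simp only [bouquet, starGraph, SimpleGraph.fromRel_adj, Equiv.coe_fn_mk, Option.map,
        SimpleGraph.pathGraph_two_eq_top]
      simp [hv, Ne.symm hv]
    · have hv := v.2
      simp only [bouquet, starGraph, SimpleGraph.fromRel_adj, Equiv.coe_fn_mk, Option.map,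
        SimpleGraph.pathGraph_two_eq_top]
      simp [hv, Ne.symm hv]
    · refine iff_of_false ?_ ?_
      · simp only [Equiv.coe_fn_mk, Option.map, starGraph, SimpleGraph.fromRel_adj]
        simp
      · rw [bouquet, SimpleGraph.fromRel_adj]
        rintro ⟨hne, h | h⟩
        · obtain ⟨h', hadj⟩ := h
          dsimp at h'
          subst h'
          rw [SimpleGraph.pathGraph_two_eq_top] at hadj
          rw [fin2_sub_eq v, fin2_sub_eq v'] at hadj
          exact hadj.ne rfl
        · obtain ⟨h', hadj⟩ := h
          dsimp at h'
          subst h'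
          rw [SimpleGraph.pathGraph_two_eq_top] at hadj
          rw [fin2_sub_eq v, fin2_sub_eq v'] at hadj
          exact hadj.ne rfl

/-- sharpness of the upper bound for bouquets: the bouquet of `n`
copies of `P₂` (each at a chosen endpoint) is the star `K_{1,n}`, and
`γ_sp(K_{1,n}) = n = Σᵢ γ_sp(P₂)` (using `γ_sp(P₂) = 1`). -/
theorem stmt_18 (n : ℕ) (hn : 1 ≤ n) :
    Nonempty (bouquet (fun _ : Fin n => SimpleGraph.pathGraph 2)
      (fun _ => (0 : Fin 2)) ≃g starGraph n) ∧
    superDominationNumber (SimpleGraph.pathGraph 2) = 1 ∧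
    superDominationNumber (starGraph n) = n ∧
    superDominationNumber
        (bouquet (fun _ : Fin n => SimpleGraph.pathGraph 2) (fun _ => (0 : Fin 2))) =
      ∑ _i : Fin n, superDominationNumber (SimpleGraph.pathGraph 2) := by
  refine ⟨⟨bouquetStarIso n⟩, p2_superDom, star_superDom n hn, ?_⟩
  rw [superDom_iso (bouquetStarIso n), star_superDom n hn, p2_superDom]
  simp
end
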